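/- For fixed w > 0 and the barrel B = ⋃_{j ∈ ℕ} {(x,y) ∈ Q_j × Q_j : x ⪯ y + w/j} in (P,V), no ũ is contained in B: for every u ∈ V there exist j ∈ ℕ and a,b > 0 with w < a − b < ju, so that (a_j, b_j) ∈ ũ = {(x,y) ∈ P² : x ⪯ y + u} but (a_j, b_j) ∉ B. Consequently the locally convex cone (P,V) is barreled but not upper-barreled. -/

import Mathlib

/-!
`B` is the polar of the dual functionals `∞̄`, `0̄_k` and `(1/w)_k`: a pair `(a_i, b_i)` lies in
`B` iff `a ≤ b + w`, and `(1/w)_k` separates every other pair of level `k`. Polars of continuous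
linear functionals are convex and closed in the sense of clause (4), and `B` is absorbing, so `B`
is a barrel. At level `j` the neighbourhood `ũ` allows `a - b ≤ j u` while `B` only allows
`a - b ≤ w`, so no `ũ` is contained in `B` once `j u > w`.

The cone is nevertheless barreled: the symmetric neighbourhood of `b_k` of radius `v` is the
segment `[(b - k v)_k, (b + k v)_k]`, both endpoints are absorbed by any barrel, and convexity of the
barrel absorbs the whole segment with the larger of the two scalars.
-/

open scoped NNReal ENNReal

/-- The positive reals, used for the values `a` in elements `a_i`. -/
abbrev Rpos := {a : ℝ // 0 < a}

/-- The cone `P = {a_i : a ∈ (0,∞), i ∈ ℕ} ∪ {0₀, ∞_∞}`. -/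
inductive CP : Type where
  | zero : CP
  | inf : CP
  | elt : Rpos → ℕ+ → CP

namespace CP

/-- Addition on `P`. -/
def add : CP → CP → CP
  | zero, x => x
  | x, zero => x
  | inf, _ => inf
  | _, inf => inf
  | elt a i, elt b j =>
      if i = j then elt ⟨a.1 + b.1, add_pos a.2 b.2⟩ i else inf

/-- Scalar multiplication by nonnegative reals on `P`. -/
noncomputable def smul (r : ℝ≥0) (x : CP) : CP :=
  if h : r = 0 then zero
  else
    match x with
    | zero => zero
    | inf => inf
    | elt a i => elt ⟨(r : ℝ) * a.1,
        mul_pos (by exact_mod_cast pos_iff_ne_zero.mpr h) a.2⟩ i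

/-- The preorder on `P`: `a_i ⪯ b_j` iff `i = j` and `a ≤ b`. -/
def le : CP → CP → Prop
  | zero, zero => True
  | inf, inf => True
  | elt a i, elt b j => i = j ∧ a.1 ≤ b.1
  | _, _ => False

/-- The neighborhood relation: `nrel v x y` means `x ⪯ y + v`. -/
def nrel (v : ℝ) : CP → CP → Prop
  | zero, _ => True
  | _, inf => True
  | elt a i, elt b j => i = j ∧ a.1 ≤ b.1 + (i : ℝ) * v
  | _, _ => False

/-- The subcone `Q_j = {b_j : b ∈ (0,∞)} ∪ {0₀, ∞_∞}`. -/
def Q (j : ℕ+) : Set CP := {x | x = zero ∨ x = inf ∨ ∃ a : Rpos, x = elt a j}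

/-- Symmetric neighborhood of `b` relative to the subcone `Qs`. -/
def symN (Qs : Set CP) (v : ℝ) (b : CP) : Set CP :=
  {a ∈ Qs | nrel v a b ∧ nrel v b a}

/-- Linearity of a functional `μ : P → ℝ ∪ {+∞}` relative to a subcone. -/
def IsLinearOn (Qs : Set CP) (μ : CP → EReal) : Prop :=
  μ zero = 0 ∧ (∀ x, μ x ≠ ⊥) ∧
  (∀ x ∈ Qs, ∀ y ∈ Qs, μ (add x y) = μ x + μ y) ∧
  (∀ r : ℝ≥0, ∀ x ∈ Qs, μ (smul r x) = ((r : ℝ) : EReal) * μ x)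

/-- (Uniform) continuity of a functional relative to a subcone. -/
def IsContOn (Qs : Set CP) (μ : CP → EReal) : Prop :=
  ∃ v : ℝ, 0 < v ∧ ∀ x ∈ Qs, ∀ y ∈ Qs, nrel v x y → μ x ≤ μ y + 1

/-- Membership in the dual cone of the subcone `Qs`. -/
def InDualOn (Qs : Set CP) (μ : CP → EReal) : Prop :=
  IsLinearOn Qs μ ∧ IsContOn Qs μ

/-- `λ B = {(λx, λy) : (x,y) ∈ B}`. -/
def scaleSet (l : ℝ≥0) (B : Set (CP × CP)) : Set (CP × CP) :=
  (fun p => (smul l p.1, smul l p.2)) '' B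

/-- `B` is a barrel in the subcone `Qs`. -/
def IsBarrelOn (Qs : Set CP) (B : Set (CP × CP)) : Prop :=
  (∀ p ∈ B, p.1 ∈ Qs ∧ p.2 ∈ Qs) ∧
  (∀ p ∈ B, ∀ q ∈ B, ∀ t : ℝ≥0, t ≤ 1 →
     (add (smul t p.1) (smul (1 - t) q.1),
      add (smul t p.2) (smul (1 - t) q.2)) ∈ B) ∧
  (∀ b ∈ Qs, ∃ v : ℝ, 0 < v ∧ ∀ a ∈ symN Qs v b,
     ∃ l : ℝ≥0, 0 < l ∧ (a, b) ∈ scaleSet l B) ∧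
  (∀ a ∈ Qs, ∀ b ∈ Qs, (a, b) ∉ B → ∃ μ : CP → EReal, InDualOn Qs μ ∧
     μ b + 1 < μ a ∧ ∀ p ∈ B, μ p.1 ≤ μ p.2 + 1)

/-- The subcone `Qs` is barreled. -/
def BarreledOn (Qs : Set CP) : Prop :=
  ∀ B, IsBarrelOn Qs B → ∀ b ∈ Qs, ∃ v : ℝ, 0 < v ∧ ∃ l : ℝ≥0, 0 < l ∧
    ∀ a ∈ symN Qs v b, (a, b) ∈ scaleSet l B

/-- The subcone `Qs` is upper-barreled. -/
def UpperBarreledOn (Qs : Set CP) : Prop :=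
  ∀ B, IsBarrelOn Qs B → ∃ v : ℝ, 0 < v ∧
    ∀ p : CP × CP, p.1 ∈ Qs → p.2 ∈ Qs → nrel v p.1 p.2 → p ∈ B

/-- The functional `∞̄` (resp. its extension `∞̄~`). -/
noncomputable def fnBarInf : CP → EReal
  | zero => 0
  | _ => ⊤

/-- The functional `0̄_k` (resp. its extension). -/
noncomputable def fnBarZero (k : ℕ+) : CP → EReal
  | zero => 0
  | inf => ⊤
  | elt _ i => if i = k then 0 else ⊤

/-- The functional `c_k : a_k ↦ c·a` (extended by `+∞` off `Q_k`). -/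
noncomputable def fnLam (c : ℝ) (k : ℕ+) : CP → EReal
  | zero => 0
  | inf => ⊤
  | elt a i => if i = k then ((c * a.1 : ℝ) : EReal) else ⊤

/-- The zero functional. -/
noncomputable def fnZero : CP → EReal := fun _ => 0

/-- The barrel `B_j = {(x,y) ∈ Q_j² : x ⪯ y + w/j}`. -/
def Bset (w : ℝ) (j : ℕ+) : Set (CP × CP) :=
  {p | p.1 ∈ Q j ∧ p.2 ∈ Q j ∧ nrel (w / (j : ℝ)) p.1 p.2}

/-- The barrel `B = ⋃_j B_j`. -/
def BigB (w : ℝ) : Set (CP × CP) := ⋃ (j : ℕ+), Bset w j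

/-- The map `Λ : Q_j → [0,∞]`, `a_j ↦ a/j`. -/
noncomputable def Lam (j : ℕ+) : CP → ℝ≥0∞
  | zero => 0
  | inf => ⊤
  | elt a _ => ENNReal.ofReal (a.1 / (j : ℝ))


@[simp] protected lemma zero_add (x : CP) : add zero x = x := by cases x <;> rfl

@[simp] protected lemma add_zero (x : CP) : add x zero = x := by cases x <;> rfl

@[simp] lemma inf_add (x : CP) : add inf x = inf := by cases x <;> rfl

@[simp] lemma add_inf (x : CP) : add x inf = inf := by cases x <;> rfl

@[simp] lemma elt_add_elt_self (a b : Rpos) (i : ℕ+) :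
    add (elt a i) (elt b i) = elt ⟨a.1 + b.1, add_pos a.2 b.2⟩ i := by
  simp [add]

lemma elt_add_elt_of_ne (a b : Rpos) {i j : ℕ+} (h : i ≠ j) : add (elt a i) (elt b j) = inf := by
  simp [add, h]

lemma add_eq_zero_iff {x y : CP} : add x y = zero ↔ x = zero ∧ y = zero := by
  cases x <;> cases y <;> simp only [add] <;> grind

@[simp] protected lemma zero_smul (x : CP) : smul 0 x = zero := by simp [smul]

@[simp] protected lemma smul_zero (r : ℝ≥0) : smul r zero = zero := by
  unfold smul; split <;> rfl

lemma smul_inf {r : ℝ≥0} (hr : r ≠ 0) : smul r inf = inf := by simp [smul, hr]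

lemma smul_elt {r : ℝ≥0} (hr : r ≠ 0) (a : Rpos) (i : ℕ+) :
    smul r (elt a i) =
      elt ⟨r * a.1, mul_pos (NNReal.coe_pos.mpr (pos_iff_ne_zero.mpr hr)) a.2⟩ i := by
  simp [smul, hr]

@[simp] protected lemma one_smul (x : CP) : smul 1 x = x := by
  cases x with
  | zero => simp
  | inf => exact smul_inf one_ne_zero
  | elt a i => simp [smul_elt one_ne_zero]

protected lemma smul_smul (r s : ℝ≥0) (x : CP) : smul r (smul s x) = smul (r * s) x := by
  rcases eq_or_ne r 0 with rfl | hr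
  · simp
  rcases eq_or_ne s 0 with rfl | hs
  · simp
  have hrs : r * s ≠ 0 := mul_ne_zero hr hs
  cases x with
  | zero => simp
  | inf => rw [smul_inf hs, smul_inf hr, smul_inf hrs]
  | elt a i => simp [smul_elt hs, smul_elt hr, smul_elt hrs, mul_assoc]

protected lemma smul_add (r : ℝ≥0) (x y : CP) :
    smul r (add x y) = add (smul r x) (smul r y) := by
  rcases eq_or_ne r 0 with rfl | hr
  · simp
  cases x with
  | zero => simp
  | inf => simp [smul_inf hr]
  | elt a i =>
    cases y with
    | zero => simp
    | inf => simp [smul_inf hr]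
    | elt b j =>
      rcases eq_or_ne i j with rfl | hij
      · simp [smul_elt hr, mul_add]
      · simp [elt_add_elt_of_ne _ _ hij, smul_inf hr, smul_elt hr]

lemma smul_eq_zero_iff {r : ℝ≥0} (hr : r ≠ 0) {x : CP} : smul r x = zero ↔ x = zero := by
  cases x <;> simp [smul_inf hr, smul_elt hr]

@[simp] lemma nrel_zero_left (v : ℝ) (y : CP) : nrel v zero y := by cases y <;> trivial

@[simp] lemma nrel_inf_right (v : ℝ) (x : CP) : nrel v x inf := by cases x <;> trivial

lemma nrel_inf_left_iff {v : ℝ} {y : CP} : nrel v inf y ↔ y = inf := by cases y <;> simp [nrel]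

lemma nrel_zero_right_iff {v : ℝ} {x : CP} : nrel v x zero ↔ x = zero := by
  cases x <;> simp [nrel]

lemma mem_symN_zero {v : ℝ} {a : CP} : a ∈ symN Set.univ v zero ↔ a = zero := by
  constructor
  · exact fun h => nrel_zero_right_iff.mp h.2.1
  · rintro rfl; simp [symN]

lemma mem_symN_inf {v : ℝ} {a : CP} : a ∈ symN Set.univ v inf ↔ a = inf := by
  constructor
  · exact fun h => nrel_inf_left_iff.mp h.2.2
  · rintro rfl; simp [symN]

lemma mem_symN_elt {v : ℝ} {a : CP} {b : Rpos} {k : ℕ+} :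
    a ∈ symN Set.univ v (elt b k) ↔ ∃ c : Rpos, a = elt c k ∧ |c.1 - b.1| ≤ k * v := by
  constructor
  · rintro ⟨-, h₁, h₂⟩
    cases a with
    | zero => exact absurd (nrel_zero_right_iff.mp h₂) (by simp)
    | inf => exact absurd (nrel_inf_left_iff.mp h₁) (by simp)
    | elt c i =>
      obtain ⟨rfl, hcb⟩ := h₁
      exact ⟨c, rfl, abs_sub_le_iff.mpr ⟨by linarith, by linarith [h₂.2]⟩⟩
  · rintro ⟨c, rfl, hcb⟩
    obtain ⟨h₁, h₂⟩ := abs_sub_le_iff.mp hcb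
    exact ⟨trivial, ⟨rfl, by linarith⟩, ⟨rfl, by linarith⟩⟩

/-- Clause (2) of `IsBarrelOn`. -/
def IsConvex (B : Set (CP × CP)) : Prop :=
  ∀ p ∈ B, ∀ q ∈ B, ∀ t : ℝ≥0, t ≤ 1 →
    (add (smul t p.1) (smul (1 - t) q.1), add (smul t p.2) (smul (1 - t) q.2)) ∈ B

/-- Clause (3) of `IsBarrelOn` for `Qs = univ`. -/
def IsAbsorbing (B : Set (CP × CP)) : Prop :=
  ∀ b ∈ (Set.univ : Set CP), ∃ v : ℝ, 0 < v ∧ ∀ a ∈ symN Set.univ v b,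
    ∃ l : ℝ≥0, 0 < l ∧ (a, b) ∈ scaleSet l B

@[simp] lemma scaleSet_one (B : Set (CP × CP)) : scaleSet 1 B = B := by simp [scaleSet]

lemma IsConvex.scaleSet {B : Set (CP × CP)} (hB : IsConvex B) (l : ℝ≥0) :
    IsConvex (scaleSet l B) := by
  rintro _ ⟨p, hp, rfl⟩ _ ⟨q, hq, rfl⟩ t ht
  refine ⟨_, hB p hp q hq t ht, ?_⟩
  simp only [CP.smul_add, CP.smul_smul, mul_comm]

lemma IsConvex.smul_mem {B : Set (CP × CP)} (hB : IsConvex B) (h₀ : (zero, zero) ∈ B)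
    {p : CP × CP} (hp : p ∈ B) {t : ℝ≥0} (ht : t ≤ 1) : (smul t p.1, smul t p.2) ∈ B := by
  simpa using hB p hp _ h₀ t ht

lemma IsAbsorbing.zero_zero_mem {B : Set (CP × CP)} (hB : IsAbsorbing B) : (zero, zero) ∈ B := by
  obtain ⟨v, -, hv⟩ := hB zero trivial
  obtain ⟨l, hl, p, hp, hpl⟩ := hv zero (mem_symN_zero.mpr rfl)
  obtain ⟨h₁, h₂⟩ := Prod.mk.inj hpl
  rw [smul_eq_zero_iff hl.ne'] at h₁ h₂
  rwa [show p = (zero, zero) from Prod.ext h₁ h₂] at hp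

lemma scaleSet_mono {B : Set (CP × CP)} (hB : IsConvex B) (h₀ : (zero, zero) ∈ B)
    {l L : ℝ≥0} (hlL : l ≤ L) (hL : L ≠ 0) : scaleSet l B ⊆ scaleSet L B := by
  rintro _ ⟨p, hp, rfl⟩
  refine ⟨_, hB.smul_mem h₀ hp (div_le_one_of_le₀ hlL L.2), ?_⟩
  simp only [CP.smul_smul, mul_div_cancel₀ _ hL]

lemma add_smul_elt_smul_elt {t : ℝ≥0} (ht : t ≤ 1) {x y z : Rpos} (k : ℕ+)
    (hz : z.1 = t * x.1 + (1 - t) * y.1) :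
    add (smul t (elt x k)) (smul (1 - t) (elt y k)) = elt z k := by
  rcases eq_or_ne t 0 with rfl | h₀
  · simp only [CP.zero_smul, CP.zero_add, tsub_zero, CP.one_smul]
    congr 1; exact Subtype.ext (by simp [hz])
  rcases eq_or_ne t 1 with rfl | h₁
  · simp only [tsub_self, CP.zero_smul, CP.add_zero, CP.one_smul]
    congr 1; exact Subtype.ext (by simp [hz])
  have hs : 1 - t ≠ 0 := (tsub_pos_of_lt (lt_of_le_of_ne ht h₁)).ne'
  rw [smul_elt h₀, smul_elt hs, elt_add_elt_self]
  congr 1; exact Subtype.ext (by simp [hz, NNReal.coe_sub ht])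

lemma exists_add_smul_elt_smul_elt_eq {x y z : Rpos} (hxz : x.1 ≤ z.1) (hzy : z.1 ≤ y.1)
    (k : ℕ+) : ∃ t : ℝ≥0, t ≤ 1 ∧ add (smul t (elt x k)) (smul (1 - t) (elt y k)) = elt z k := by
  rcases eq_or_lt_of_le (hxz.trans hzy) with hxy | hxy
  · refine ⟨1, le_rfl, add_smul_elt_smul_elt le_rfl k ?_⟩
    rw [NNReal.coe_one]; linarith
  set t := (y.1 - z.1) / (y.1 - x.1) with ht
  have ht₀ : 0 ≤ t := div_nonneg (by linarith) (by linarith)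
  have ht₁ : t.toNNReal ≤ 1 := Real.toNNReal_le_one.mpr ((div_le_one (by linarith)).mpr (by linarith))
  refine ⟨t.toNNReal, ht₁, add_smul_elt_smul_elt ht₁ k ?_⟩
  rw [Real.coe_toNNReal _ ht₀, ht]
  field_simp
  ring

lemma exists_forall_mem_symN_elt_mem_scaleSet {B : Set (CP × CP)} (hB : IsConvex B)
    (h₀ : (zero, zero) ∈ B) {b : Rpos} {k : ℕ+} {v : ℝ} (hv : 0 < v)
    (hvB : ∀ a ∈ symN Set.univ v (elt b k), ∃ l : ℝ≥0, 0 < l ∧ (a, elt b k) ∈ scaleSet l B) :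
    ∃ v' : ℝ, 0 < v' ∧ ∃ l : ℝ≥0, 0 < l ∧
      ∀ a ∈ symN Set.univ v' (elt b k), (a, elt b k) ∈ scaleSet l B := by
  set v' := min v (b.1 / (2 * k))
  have hv' : 0 < v' := lt_min hv (by have := b.2; positivity)
  have hkv'_le : k * v' ≤ k * v := by gcongr; exact min_le_left _ _
  have hkv'_lt : k * v' ≤ b.1 / 2 := by
    calc k * v' ≤ k * (b.1 / (2 * k)) := by gcongr; exact min_le_right _ _
      _ = b.1 / 2 := by field_simp
  have hkv'_pos : 0 < (k : ℝ) * v' := by positivity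
  -- The `v'`-neighbourhood of `b_k` is the segment between `lo_k` and `hi_k`, which lie in the
  -- `v`-neighbourhood and are therefore absorbed; `v' ≤ b / 2k` keeps `lo` positive.
  let lo : Rpos := ⟨b.1 - k * v', by linarith [b.2]⟩
  let hi : Rpos := ⟨b.1 + k * v', by linarith [b.2]⟩
  obtain ⟨l₁, hl₁, hlo⟩ := hvB (elt lo k)
    (mem_symN_elt.mpr ⟨lo, rfl, by simpa [lo, abs_of_pos hkv'_pos] using hkv'_le⟩)
  obtain ⟨l₂, hl₂, hhi⟩ := hvB (elt hi k)
    (mem_symN_elt.mpr ⟨hi, rfl, by simpa [hi, abs_of_pos hkv'_pos] using hkv'_le⟩)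
  set L := max l₁ l₂
  have hL : L ≠ 0 := (lt_max_of_lt_left hl₁).ne'
  refine ⟨v', hv', L, pos_iff_ne_zero.mpr hL, fun a ha => ?_⟩
  obtain ⟨c, rfl, hc⟩ := mem_symN_elt.mp ha
  obtain ⟨hc₁, hc₂⟩ := abs_sub_le_iff.mp hc
  obtain ⟨t, ht, hct⟩ := exists_add_smul_elt_smul_elt_eq (x := lo) (y := hi) (z := c)
    (by dsimp only [lo]; linarith) (by dsimp only [hi]; linarith) k
  have hbt := add_smul_elt_smul_elt ht k (x := b) (y := b) (z := b) (by ring)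
  simpa only [hct, hbt] using (hB.scaleSet L) _ (scaleSet_mono hB h₀ (le_max_left _ _) hL hlo)
    _ (scaleSet_mono hB h₀ (le_max_right _ _) hL hhi) t ht

theorem barreledOn_univ : BarreledOn Set.univ := by
  rintro B ⟨-, hconv, habs, -⟩ b -
  have h₀ : (zero, zero) ∈ B := IsAbsorbing.zero_zero_mem habs
  obtain ⟨v, hv, hvB⟩ := habs b trivial
  cases b with
  | zero =>
    obtain ⟨l, hl, hB⟩ := hvB zero (mem_symN_zero.mpr rfl)
    exact ⟨v, hv, l, hl, fun a ha => by rwa [mem_symN_zero.mp ha]⟩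
  | inf =>
    obtain ⟨l, hl, hB⟩ := hvB inf (mem_symN_inf.mpr rfl)
    exact ⟨v, hv, l, hl, fun a ha => by rwa [mem_symN_inf.mp ha]⟩
  | elt b k => exact exists_forall_mem_symN_elt_mem_scaleSet hconv h₀ hv hvB

theorem _root_.EReal.coe_mul_add_coe_mul_le_add_one {t s : ℝ} (ht : 0 ≤ t) (hs : 0 ≤ s)
    (hts : t + s = 1) {x₁ x₂ y₁ y₂ : EReal} (h₁ : x₁ ≤ y₁ + 1) (h₂ : x₂ ≤ y₂ + 1) :
    (t : EReal) * x₁ + s * x₂ ≤ t * y₁ + s * y₂ + 1 := by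
  have ht' : (0 : EReal) ≤ t := EReal.coe_nonneg.mpr ht
  have hs' : (0 : EReal) ≤ s := EReal.coe_nonneg.mpr hs
  calc (t : EReal) * x₁ + s * x₂ ≤ t * (y₁ + 1) + s * (y₂ + 1) :=
        add_le_add (mul_le_mul_of_nonneg_left h₁ ht') (mul_le_mul_of_nonneg_left h₂ hs')
    _ = t * y₁ + s * y₂ + ((t + s : ℝ) : EReal) := by
        rw [EReal.left_distrib_of_nonneg_of_ne_top ht' (EReal.coe_ne_top t),
          EReal.left_distrib_of_nonneg_of_ne_top hs' (EReal.coe_ne_top s), EReal.coe_add,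
          mul_one, mul_one]
        abel
    _ = t * y₁ + s * y₂ + 1 := by rw [hts, EReal.coe_one]

@[simp] lemma _root_.EReal.one_ne_top : (1 : EReal) ≠ ⊤ := by
  exact_mod_cast EReal.coe_ne_top 1

@[simp] lemma _root_.EReal.top_add_one : (⊤ : EReal) + 1 = ⊤ := by
  exact_mod_cast EReal.top_add_coe 1

def polar (M : Set (CP → EReal)) : Set (CP × CP) := {p | ∀ μ ∈ M, μ p.1 ≤ μ p.2 + 1}

lemma isConvex_polar {M : Set (CP → EReal)} (hM : ∀ μ ∈ M, IsLinearOn Set.univ μ) :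
    IsConvex (polar M) := by
  intro p hp q hq t ht μ hμ
  obtain ⟨-, -, hadd, hsmul⟩ := hM μ hμ
  simp only [hadd _ trivial _ trivial, hsmul _ _ trivial]
  refine EReal.coe_mul_add_coe_mul_le_add_one t.coe_nonneg (1 - t).coe_nonneg ?_ (hp μ hμ) (hq μ hμ)
  rw [NNReal.coe_sub ht, NNReal.coe_one]; ring

lemma isBarrelOn_polar {M : Set (CP → EReal)} (hM : ∀ μ ∈ M, InDualOn Set.univ μ)
    (habs : IsAbsorbing (polar M)) : IsBarrelOn Set.univ (polar M) := by
  refine ⟨fun _ _ => ⟨trivial, trivial⟩, isConvex_polar fun μ hμ => (hM μ hμ).1, habs, ?_⟩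
  intro a _ b _ hab
  obtain ⟨μ, hμ, hlt⟩ : ∃ μ ∈ M, μ b + 1 < μ a := by simpa [polar] using hab
  exact ⟨μ, hM μ hμ, hlt, fun p hp => hp μ hμ⟩

@[simp] lemma fnBarInf_zero : fnBarInf zero = 0 := rfl

lemma fnBarInf_of_ne_zero {x : CP} (hx : x ≠ zero) : fnBarInf x = ⊤ := by
  cases x <;> simp_all [fnBarInf]

lemma fnBarInf_nonneg (x : CP) : 0 ≤ fnBarInf x := by cases x <;> simp [fnBarInf]

lemma isLinearOn_fnBarInf : IsLinearOn Set.univ fnBarInf := by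
  refine ⟨rfl, fun x => by cases x <;> simp [fnBarInf], fun x _ y _ => ?_, fun r x _ => ?_⟩
  · rcases eq_or_ne x zero with rfl | hx
    · simp
    rcases eq_or_ne y zero with rfl | hy
    · simp
    rw [fnBarInf_of_ne_zero hx, fnBarInf_of_ne_zero hy,
      fnBarInf_of_ne_zero fun h => hx (add_eq_zero_iff.mp h).1, EReal.top_add_top]
  · rcases eq_or_ne r 0 with rfl | hr
    · simp
    rcases eq_or_ne x zero with rfl | hx
    · simp
    rw [fnBarInf_of_ne_zero hx, fnBarInf_of_ne_zero ((smul_eq_zero_iff hr).not.mpr hx),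
      EReal.coe_mul_top_of_pos (NNReal.coe_pos.mpr (pos_iff_ne_zero.mpr hr))]

lemma isContOn_fnBarInf : IsContOn Set.univ fnBarInf := by
  refine ⟨1, one_pos, fun x _ y _ hxy => ?_⟩
  rcases eq_or_ne x zero with rfl | hx
  · simpa using (fnBarInf_nonneg y).trans (le_add_of_nonneg_right zero_le_one)
  have hy : y ≠ zero := fun h => hx (nrel_zero_right_iff.mp (h ▸ hxy))
  simp [fnBarInf_of_ne_zero hx, fnBarInf_of_ne_zero hy]

@[simp] lemma fnLam_zero (c : ℝ) (k : ℕ+) : fnLam c k zero = 0 := rfl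

@[simp] lemma fnLam_inf (c : ℝ) (k : ℕ+) : fnLam c k inf = ⊤ := rfl

lemma fnLam_elt (c : ℝ) (k : ℕ+) (a : Rpos) (i : ℕ+) :
    fnLam c k (elt a i) = if i = k then ((c * a.1 : ℝ) : EReal) else ⊤ := rfl

lemma fnLam_ne_bot (c : ℝ) (k : ℕ+) (x : CP) : fnLam c k x ≠ ⊥ := by
  cases x with
  | elt a i =>
    rw [fnLam_elt]; split_ifs
    · exact EReal.coe_ne_bot _
    · simp
  | _ => simp

lemma fnLam_nonneg {c : ℝ} (hc : 0 ≤ c) (k : ℕ+) (x : CP) : 0 ≤ fnLam c k x := by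
  cases x with
  | elt a i =>
    rw [fnLam_elt]; split_ifs
    · exact EReal.coe_nonneg.mpr (mul_nonneg hc a.2.le)
    · exact le_top
  | _ => simp

lemma isLinearOn_fnLam (c : ℝ) (k : ℕ+) : IsLinearOn Set.univ (fnLam c k) := by
  refine ⟨rfl, fnLam_ne_bot c k, fun x _ y _ => ?_, fun r x _ => ?_⟩
  · cases x with
    | zero => simp
    | inf => simp [EReal.top_add_of_ne_bot (fnLam_ne_bot c k y)]
    | elt a i =>
      cases y with
      | zero => simp
      | inf => simp [EReal.add_top_of_ne_bot (fnLam_ne_bot c k _)]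
      | elt b j =>
        rcases eq_or_ne i j with rfl | hij
        · simp only [elt_add_elt_self, fnLam_elt]
          split_ifs
          · rw [← EReal.coe_add, mul_add]
          · simp
        · rw [elt_add_elt_of_ne _ _ hij, fnLam_inf, fnLam_elt, fnLam_elt]
          split_ifs with hi hj
          · exact absurd (hi.trans hj.symm) hij
          · exact (EReal.add_top_of_ne_bot (EReal.coe_ne_bot _)).symm
          · exact (EReal.top_add_of_ne_bot (EReal.coe_ne_bot _)).symm
          · exact EReal.top_add_top.symm
  · rcases eq_or_ne r 0 with rfl | hr
    · simp
    have hr' : (0 : ℝ) < r := NNReal.coe_pos.mpr (pos_iff_ne_zero.mpr hr)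
    cases x with
    | zero => simp
    | inf => simp [smul_inf hr, EReal.coe_mul_top_of_pos hr']
    | elt a i =>
      simp only [smul_elt hr, fnLam_elt]
      split_ifs
      · rw [← EReal.coe_mul]; ring_nf
      · rw [EReal.coe_mul_top_of_pos hr']

lemma fnLam_elt_le_fnLam_elt_add_one {c : ℝ} {k i : ℕ+} {a b : Rpos}
    (hab : i = k → c * a.1 ≤ c * b.1 + 1) : fnLam c k (elt a i) ≤ fnLam c k (elt b i) + 1 := by
  simp only [fnLam_elt]
  split_ifs with hik
  · exact_mod_cast hab hik
  · simp

lemma isContOn_fnLam {c : ℝ} (hc : 0 ≤ c) (k : ℕ+) : IsContOn Set.univ (fnLam c k) := by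
  refine ⟨((c + 1) * k)⁻¹, by positivity, fun x _ y _ hxy => ?_⟩
  cases x with
  | zero => simpa using (fnLam_nonneg hc k y).trans (le_add_of_nonneg_right zero_le_one)
  | inf => simp [nrel_inf_left_iff.mp hxy]
  | elt a i =>
    cases y with
    | zero => exact absurd (nrel_zero_right_iff.mp hxy) (by simp)
    | inf => simp
    | elt b j =>
      obtain ⟨rfl, hab⟩ := hxy
      refine fnLam_elt_le_fnLam_elt_add_one fun hik => ?_
      subst hik
      have hshift : c * (i * ((c + 1) * i)⁻¹) ≤ 1 := by
        have : c * (i * ((c + 1) * i)⁻¹) = c / (c + 1) := by field_simp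
        rw [this, div_le_one (by positivity)]
        linarith
      nlinarith

lemma zero_mem_Q (j : ℕ+) : zero ∈ Q j := Or.inl rfl

lemma inf_mem_Q (j : ℕ+) : inf ∈ Q j := Or.inr (Or.inl rfl)

lemma elt_mem_Q_iff {a : Rpos} {i j : ℕ+} : elt a i ∈ Q j ↔ i = j := by
  simp [Q, eq_comm]

lemma exists_mem_Q (x : CP) : ∃ j, x ∈ Q j := by
  cases x with
  | elt a i => exact ⟨i, elt_mem_Q_iff.mpr rfl⟩
  | _ => exact ⟨1, by simp [Q]⟩

lemma mem_BigB_iff {w : ℝ} {p : CP × CP} :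
    p ∈ BigB w ↔ p.1 = zero ∨ p.2 = inf ∨
      ∃ (i : ℕ+) (a b : Rpos), p.1 = elt a i ∧ p.2 = elt b i ∧ a.1 ≤ b.1 + w := by
  obtain ⟨x, y⟩ := p
  simp only [BigB, Bset, Set.mem_iUnion]
  constructor
  · rintro ⟨j, hx, -, hxy⟩
    cases x with
    | zero => exact Or.inl rfl
    | inf => exact Or.inr (Or.inl (nrel_inf_left_iff.mp hxy))
    | elt a i =>
      cases y with
      | zero => exact absurd (nrel_zero_right_iff.mp hxy) (by simp)
      | inf => exact Or.inr (Or.inl rfl)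
      | elt b i' =>
        obtain ⟨rfl, hab⟩ := hxy
        obtain rfl := elt_mem_Q_iff.mp hx
        refine Or.inr (Or.inr ⟨i, a, b, rfl, rfl, ?_⟩)
        rwa [mul_div_cancel₀ _ (by positivity)] at hab
  · rintro (rfl | rfl | ⟨i, a, b, rfl, rfl, hab⟩)
    · obtain ⟨j, hy⟩ := exists_mem_Q y
      exact ⟨j, zero_mem_Q j, hy, nrel_zero_left _ _⟩
    · obtain ⟨j, hx⟩ := exists_mem_Q x
      exact ⟨j, hx, inf_mem_Q j, nrel_inf_right _ _⟩
    · refine ⟨i, elt_mem_Q_iff.mpr rfl, elt_mem_Q_iff.mpr rfl, rfl, ?_⟩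
      rwa [mul_div_cancel₀ _ (by positivity)]

lemma elt_elt_mem_BigB_iff {w : ℝ} {a b : Rpos} {i j : ℕ+} :
    (elt a i, elt b j) ∈ BigB w ↔ i = j ∧ a.1 ≤ b.1 + w := by
  simp [mem_BigB_iff, eq_comm]

lemma exists_elt_elt_mem_scaleSet_BigB {w : ℝ} (hw : 0 < w) (a b : Rpos) (k : ℕ+) :
    ∃ l : ℝ≥0, 0 < l ∧ (elt a k, elt b k) ∈ scaleSet l (BigB w) := by
  set l : ℝ≥0 := ⟨a.1 / w, (div_pos a.2 hw).le⟩
  have hl : (0 : ℝ) < l := div_pos a.2 hw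
  have hbl : 0 < b.1 / l := div_pos b.2 hl
  refine ⟨l, NNReal.coe_pos.mp hl, (elt ⟨w, hw⟩ k, elt ⟨b.1 / l, hbl⟩ k),
    elt_elt_mem_BigB_iff.mpr ⟨rfl, by simp only; linarith⟩, ?_⟩
  simp only [smul_elt (NNReal.coe_pos.mp hl).ne', Prod.mk.injEq, elt.injEq, and_true]
  have hlv : (l : ℝ) = a.1 / w := rfl
  have ha : a.1 ≠ 0 := a.2.ne'
  constructor <;> ext <;> simp only [hlv] <;> field_simp

lemma isAbsorbing_BigB {w : ℝ} (hw : 0 < w) : IsAbsorbing (BigB w) := by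
  refine fun b _ => ⟨1, one_pos, fun a ha => ?_⟩
  cases b with
  | zero =>
    rw [mem_symN_zero.mp ha]
    exact ⟨1, one_pos, by simp [mem_BigB_iff]⟩
  | inf =>
    rw [mem_symN_inf.mp ha]
    exact ⟨1, one_pos, by simp [mem_BigB_iff]⟩
  | elt b k =>
    obtain ⟨c, rfl, -⟩ := mem_symN_elt.mp ha
    exact exists_elt_elt_mem_scaleSet_BigB hw c b k

/-- `fnLam 0 k` is the functional `0̄_k`. -/
def dualsBigB (w : ℝ) : Set (CP → EReal) :=
  insert fnBarInf {μ | ∃ k, μ = fnLam 0 k ∨ μ = fnLam w⁻¹ k}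

lemma inDualOn_of_mem_dualsBigB {w : ℝ} (hw : 0 ≤ w) {μ : CP → EReal} (hμ : μ ∈ dualsBigB w) :
    InDualOn Set.univ μ := by
  rcases hμ with rfl | ⟨k, rfl | rfl⟩
  · exact ⟨isLinearOn_fnBarInf, isContOn_fnBarInf⟩
  · exact ⟨isLinearOn_fnLam 0 k, isContOn_fnLam le_rfl k⟩
  · exact ⟨isLinearOn_fnLam _ k, isContOn_fnLam (inv_nonneg.mpr hw) k⟩

lemma BigB_subset_polar {w : ℝ} (hw : 0 ≤ w) : BigB w ⊆ polar (dualsBigB w) := by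
  intro p hp μ hμ
  obtain ⟨v, -, hcont⟩ := (inDualOn_of_mem_dualsBigB hw hμ).2
  rcases mem_BigB_iff.mp hp with h | h | ⟨i, a, b, h₁, h₂, hab⟩
  · exact h ▸ hcont _ trivial _ trivial (nrel_zero_left _ _)
  · exact h ▸ hcont _ trivial _ trivial (nrel_inf_right _ _)
  rw [h₁, h₂]
  rcases hμ with rfl | ⟨k, rfl | rfl⟩
  · simp [fnBarInf_of_ne_zero]
  · exact fnLam_elt_le_fnLam_elt_add_one fun _ => by simp
  · refine fnLam_elt_le_fnLam_elt_add_one fun _ => ?_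
    rcases hw.eq_or_lt with rfl | hw
    · simp
    calc w⁻¹ * a.1 ≤ w⁻¹ * (b.1 + w) := by gcongr
      _ = w⁻¹ * b.1 + 1 := by field_simp

lemma polar_subset_BigB {w : ℝ} (hw : 0 < w) : polar (dualsBigB w) ⊆ BigB w := by
  rintro ⟨x, y⟩ hp
  by_contra hxy
  simp only [mem_BigB_iff, not_or, not_exists, not_and, not_le] at hxy
  obtain ⟨hx, hy, hgap⟩ := hxy
  cases y with
  | zero =>
    have h := hp fnBarInf (Set.mem_insert _ _)
    simp [fnBarInf_of_ne_zero hx] at h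
  | inf => exact hy rfl
  | elt b k =>
    have h₀ := hp (fnLam 0 k) (Or.inr ⟨k, Or.inl rfl⟩)
    cases x with
    | zero => exact hx rfl
    | inf => simp [fnLam_elt] at h₀
    | elt a i =>
      rcases eq_or_ne i k with rfl | hik
      · have h := hp (fnLam w⁻¹ i) (Or.inr ⟨i, Or.inr rfl⟩)
        simp only [fnLam_elt, if_true] at h
        have h' : w⁻¹ * a.1 ≤ w⁻¹ * b.1 + 1 := by exact_mod_cast h
        rw [inv_mul_le_iff₀ hw, mul_add, mul_inv_cancel_left₀ hw.ne', mul_one] at h'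
        linarith [hgap i a b rfl rfl]
      · simp [fnLam_elt, hik] at h₀

lemma BigB_eq_polar {w : ℝ} (hw : 0 < w) : BigB w = polar (dualsBigB w) :=
  (BigB_subset_polar hw.le).antisymm (polar_subset_BigB hw)

lemma isBarrelOn_BigB {w : ℝ} (hw : 0 < w) : IsBarrelOn Set.univ (BigB w) := by
  have habs := isAbsorbing_BigB hw
  rw [BigB_eq_polar hw] at habs ⊢
  exact isBarrelOn_polar (fun μ hμ => inDualOn_of_mem_dualsBigB hw.le hμ) habs

lemma exists_nrel_notMem_BigB (w : ℝ) {u : ℝ} (hu : 0 < u) :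
    ∃ (j : ℕ+) (a b : Rpos), w < a.1 - b.1 ∧ a.1 - b.1 < (j : ℝ) * u ∧
      nrel u (elt a j) (elt b j) ∧ (elt a j, elt b j) ∉ BigB w := by
  obtain ⟨n, hn⟩ := exists_nat_gt (w / u)
  have hj : w < (n.succPNat : ℝ) * u := by
    rw [div_lt_iff₀ hu] at hn
    simp only [Nat.succPNat_coe, Nat.cast_succ]
    linarith
  obtain ⟨d, hwd, hdj⟩ := exists_between hj
  refine ⟨n.succPNat, ⟨|d| + 1 + d, by linarith [neg_abs_le d]⟩, ⟨|d| + 1, by positivity⟩,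
    ?_, ?_, ⟨rfl, ?_⟩, ?_⟩
  all_goals simp only [elt_elt_mem_BigB_iff, true_and, not_le]; linarith

/-- for every `u ∈ V` there are `j ∈ ℕ` and `a, b > 0` with
`w < a − b < ju`, so that `(a_j, b_j) ∈ ũ` but `(a_j, b_j) ∉ B`; consequently
`(P, V)` is barreled but not upper-barreled. -/
theorem stmt16 (w : ℝ) (hw : 0 < w) :
    (∀ u : ℝ, 0 < u → ∃ (j : ℕ+) (a b : Rpos),
      w < a.1 - b.1 ∧ a.1 - b.1 < (j : ℝ) * u ∧
      nrel u (elt a j) (elt b j) ∧ (elt a j, elt b j) ∉ BigB w) ∧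
    BarreledOn Set.univ ∧ ¬ UpperBarreledOn Set.univ := by
  refine ⟨fun u hu => exists_nrel_notMem_BigB w hu, barreledOn_univ, fun hupper => ?_⟩
  obtain ⟨v, hv, hsub⟩ := hupper (BigB w) (isBarrelOn_BigB hw)
  obtain ⟨j, a, b, -, -, hrel, hnotMem⟩ := exists_nrel_notMem_BigB w hv
  exact hnotMem (hsub _ trivial trivial hrel)

end CP
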